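/- Fix a sequence of poles ξ_1, ξ_2, … in the open unit disk and fix k, l ≥ 1. With z_r = e^{2πi(r−1)/N}, the averaged sample sum (1/N) Σ_{r=1}^N conj(ψ_k(z_r)) ψ_l(z_r) converges, as N → ∞, to δ_{kl} (1 if k = l, 0 otherwise). -/

import Mathlib

open Finset
open scoped NNReal ENNReal

/-- The Takenaka–Malmquist basis function ψ_{l+1} (0-indexed `l`), with poles
`ξ 0, ξ 1, …` (so `ξ j` is the paper's ξ_{j+1}). -/
noncomputable def TM (ξ : ℕ → ℂ) (l : ℕ) (z : ℂ) : ℂ :=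
  ((Real.sqrt (1 - ‖ξ l‖ ^ 2) : ℂ) / (z - ξ l)) *
    ∏ j ∈ Finset.range l, (1 - (starRingEnd ℂ) (ξ j) * z) / (z - ξ j)

/-- The sample point z_{r+1} = e^{2πi r/N} (0-indexed `r`). -/
noncomputable def zroot (N r : ℕ) : ℂ :=
  Complex.exp (2 * Real.pi * Complex.I * r / N)

lemma zroot_ne_zero (N r : ℕ) : zroot N r ≠ 0 := Complex.exp_ne_zero _

lemma abs_zroot (N r : ℕ) : ‖zroot N r‖ = 1 := by
  have h : (2 * Real.pi * Complex.I * r / N) = ((2 * Real.pi * r / N : ℝ)) * Complex.I := by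
    push_cast; ring
  rw [zroot, h, Complex.norm_exp_ofReal_mul_I]

lemma sum_zroot_zpow {N : ℕ} (hN : 1 ≤ N) (n : ℤ) :
    ∑ r ∈ range N, (zroot N r) ^ n = if (N : ℤ) ∣ n then (N : ℂ) else 0 := by
  have hNR : (N : ℂ) ≠ 0 := Nat.cast_ne_zero.2 (by omega)
  set ζ : ℂ := Complex.exp (2 * Real.pi * Complex.I * n / N) with hζ
  have hpt : ∀ r ∈ range N, (zroot N r) ^ n = ζ ^ r := by
    intro r _
    rw [zroot, ← Complex.exp_int_mul, hζ, ← Complex.exp_nat_mul]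
    ring_nf
  rw [Finset.sum_congr rfl hpt]
  have hζ1 : ζ = 1 ↔ (N : ℤ) ∣ n := by
    rw [hζ, Complex.exp_eq_one_iff]
    constructor
    · rintro ⟨m, hm⟩
      have h2 : (2 : ℂ) * Real.pi * Complex.I ≠ 0 := by
        simp [Real.pi_ne_zero, Complex.I_ne_zero]
      field_simp at hm
      have hcast : (n : ℂ) = (m : ℂ) * N := by
        apply mul_left_cancel₀ h2
        linear_combination (2 * (Real.pi : ℂ) * Complex.I) * hm
      have hn : n = m * (N : ℤ) := by exact_mod_cast hcast
      exact ⟨m, by rw [hn, mul_comm]⟩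
    · rintro ⟨m, rfl⟩
      exact ⟨m, by push_cast; field_simp⟩
  by_cases h : (N : ℤ) ∣ n
  · simp [if_pos h, hζ1.2 h]
  · rw [if_neg h]
    have hζne : ζ ≠ 1 := fun e => h (hζ1.1 e)
    have hζN : ζ ^ N = 1 := by
      rw [hζ, ← Complex.exp_nat_mul]
      have : (N : ℂ) * (2 * Real.pi * Complex.I * n / N) = n * (2 * Real.pi * Complex.I) := by
        field_simp
      rw [this, Complex.exp_int_mul_two_pi_mul_I]
    have := geom_sum_eq hζne N
    rw [this, hζN, sub_self, zero_div]

open Filter in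
lemma avg_tendsto (f : ℂ → ℂ) {R : ℝ≥0} (hR : 1 < R)
    (hf : DifferentiableOn ℂ f (Metric.closedBall 0 R)) (e : ℤ) (he : e = 1 ∨ e = -1) :
    Filter.Tendsto (fun N : ℕ => (N : ℂ)⁻¹ * ∑ r ∈ range N, f ((zroot N r) ^ e))
      Filter.atTop (nhds (f 0)) := by
  obtain ⟨a, ha, ha0, hrep⟩ : ∃ a : ℕ → ℂ, (Summable fun n => ‖a n‖) ∧ a 0 = f 0 ∧
      ∀ w : ℂ, ‖w‖ = 1 → HasSum (fun n => a n * w ^ n) (f w) := by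
    have hR0 : 0 < R := lt_trans one_pos hR
    have hp := hf.hasFPowerSeriesOnBall hR0
    set p := cauchyPowerSeries f 0 R with hpdef
    refine ⟨fun n => p.coeff n, ?_, hp.coeff_zero (fun _ => 1), ?_⟩
    · have h1 : ((1 : ℝ≥0) : ℝ≥0∞) < p.radius :=
        lt_of_lt_of_le (by exact_mod_cast hR) hp.r_le
      have := p.summable_norm_mul_pow h1
      simpa [FormalMultilinearSeries.norm_apply_eq_norm_coef] using this
    · intro w hw
      have hmem : w ∈ Metric.eball (0 : ℂ) R := by
        rw [mem_emetric_ball_zero_iff]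
        have : (‖w‖₊ : ℝ≥0) = 1 := by ext; simpa using hw
        rw [enorm_eq_nnnorm, this]; exact_mod_cast hR
      have := hp.hasSum hmem
      simp only [zero_add] at this
      show HasSum (fun n => p.coeff n * w ^ n) (f w)
      have e : (fun n => p.coeff n * w ^ n) = fun n => (p n) fun _ => w := by
        funext n
        rw [FormalMultilinearSeries.apply_eq_pow_smul_coeff, smul_eq_mul, mul_comm]
      rw [e]; exact this
  -- key identity for N ≥ 1
  have key : ∀ N : ℕ, 1 ≤ N →
      (N : ℂ)⁻¹ * ∑ r ∈ range N, f ((zroot N r) ^ e)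
        = ∑' n : ℕ, a n * (if N ∣ n then 1 else 0) := by
    intro N hN
    have hNC : (N : ℂ) ≠ 0 := Nat.cast_ne_zero.2 (by omega)
    have hpt : ∀ r ∈ range N,
        HasSum (fun n : ℕ => a n * (zroot N r) ^ (e * n)) (f ((zroot N r) ^ e)) := by
      intro r _
      have hw : ‖(zroot N r) ^ e‖ = 1 := by
        rw [norm_zpow, show ‖zroot N r‖ = 1 from abs_zroot N r, one_zpow]
      have := hrep _ hw
      convert this using 2 with n
      rw [← zpow_natCast ((zroot N r) ^ e) n, ← zpow_mul]
    have hswap : HasSum (fun n : ℕ => ∑ r ∈ range N, a n * (zroot N r) ^ (e * n))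
        (∑ r ∈ range N, f ((zroot N r) ^ e)) := hasSum_sum fun r hr => hpt r hr
    have hterm : (fun n : ℕ => ∑ r ∈ range N, a n * (zroot N r) ^ (e * n))
        = fun n : ℕ => a n * (if N ∣ n then (N : ℂ) else 0) := by
      funext n
      rw [← Finset.mul_sum, sum_zroot_zpow hN (e * n)]
      congr 1
      have hdvd : ((N : ℤ) ∣ e * n) ↔ (N ∣ n) := by
        rcases he with rfl | rfl
        · rw [one_mul, Int.natCast_dvd_natCast]
        · rw [neg_one_mul, dvd_neg, Int.natCast_dvd_natCast]
      by_cases h : N ∣ n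
      · rw [if_pos (hdvd.2 h), if_pos h]
      · rw [if_neg (fun hh => h (hdvd.1 hh)), if_neg h]
    rw [hterm] at hswap
    rw [← hswap.tsum_eq, ← tsum_mul_left]
    apply tsum_congr; intro n
    by_cases h : N ∣ n
    · rw [if_pos h, if_pos h]; field_simp
    · rw [if_neg h, if_neg h]; ring
  -- the summand family is summable and bounded
  have hsum2 : ∀ N : ℕ, Summable (fun n : ℕ => a n * (if N ∣ n then (1:ℂ) else 0)) := by
    intro N
    apply Summable.of_norm_bounded ha
    intro n
    rw [norm_mul]
    by_cases h : N ∣ n <;> simp [h]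
  have hbound : ∀ N : ℕ, 1 ≤ N →
      ‖(N : ℂ)⁻¹ * (∑ r ∈ range N, f ((zroot N r) ^ e)) - a 0‖ ≤ ∑' i, ‖a (i + N)‖ := by
    intro N hN
    rw [key N hN]
    have hsplit := Summable.sum_add_tsum_nat_add (f := fun n : ℕ => a n * (if N ∣ n then (1:ℂ) else 0))
      N (hsum2 N)
    have hhead : ∑ n ∈ range N, a n * (if N ∣ n then (1:ℂ) else 0) = a 0 := by
      rw [Finset.sum_eq_single_of_mem 0 (Finset.mem_range.2 (by omega))]
      · simp
      · intro n hn hne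
        have : ¬ N ∣ n := fun hd =>
          absurd (Nat.le_of_dvd (Nat.pos_of_ne_zero hne) hd) (not_le.2 (Finset.mem_range.1 hn))
        simp [this]
    rw [← hsplit, hhead, add_sub_cancel_left]
    have hsn : Summable fun i => ‖a (i + N)‖ := (summable_nat_add_iff N).2 ha
    calc ‖∑' i, a (i + N) * (if N ∣ (i + N) then (1:ℂ) else 0)‖
        ≤ ∑' i, ‖a (i + N) * (if N ∣ (i + N) then (1:ℂ) else 0)‖ := by
          apply norm_tsum_le_tsum_norm
          apply hsn.of_nonneg_of_le (fun _ => norm_nonneg _)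
          intro i; rw [norm_mul]
          by_cases h : N ∣ (i + N) <;> simp [h]
      _ ≤ ∑' i, ‖a (i + N)‖ := by
          apply Summable.tsum_le_tsum _ _ hsn
          · intro i; rw [norm_mul]
            by_cases h : N ∣ (i + N) <;> simp [h]
          · apply hsn.of_nonneg_of_le (fun _ => norm_nonneg _)
            intro i; rw [norm_mul]
            by_cases h : N ∣ (i + N) <;> simp [h]
  have htail : Filter.Tendsto (fun N : ℕ => ∑' i, ‖a (i + N)‖) atTop (nhds 0) :=
    by simpa using tendsto_sum_nat_add (fun n => ‖a n‖)
  rw [show f 0 = a 0 from ha0.symm, ← tendsto_sub_nhds_zero_iff]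
  apply squeeze_zero_norm' _ htail
  filter_upwards [eventually_ge_atTop 1] with N hN
  exact hbound N hN

lemma circ_ne_zero {z : ℂ} (hz : ‖z‖ = 1) : z ≠ 0 := by
  intro h; rw [h] at hz; simp at hz

lemma circ_conj {z : ℂ} (hz : ‖z‖ = 1) : (starRingEnd ℂ) z = z⁻¹ := by
  apply eq_inv_of_mul_eq_one_right
  rw [Complex.mul_conj, Complex.normSq_eq_norm_sq, hz]; norm_num

lemma circ_sub_ne {z w : ℂ} (hz : ‖z‖ = 1) (hw : ‖w‖ < 1) :
    z - w ≠ 0 := by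
  intro h
  rw [sub_eq_zero] at h
  rw [← h] at hw
  exact absurd hz (ne_of_lt hw)

lemma circ_den_ne {z w : ℂ} (hz : ‖z‖ = 1) (hw : ‖w‖ < 1) :
    1 - (starRingEnd ℂ) w * z ≠ 0 := by
  intro h
  rw [sub_eq_zero] at h
  have : ‖(starRingEnd ℂ) w * z‖ = 1 := by rw [← h]; simp
  rw [norm_mul, Complex.norm_conj, hz, mul_one] at this
  exact absurd this (ne_of_lt hw)

lemma conj_TM (ξ : ℕ → ℂ) (hξ : ∀ j, ‖ξ j‖ < 1) (k : ℕ) {z : ℂ}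
    (hz : ‖z‖ = 1) :
    (starRingEnd ℂ) (TM ξ k z) =
      (Real.sqrt (1 - ‖ξ k‖ ^ 2) : ℂ) * z / (1 - (starRingEnd ℂ) (ξ k) * z) *
        ∏ j ∈ range k, (z - ξ j) / (1 - (starRingEnd ℂ) (ξ j) * z) := by
  have hz0 := circ_ne_zero hz
  rw [TM, map_mul, map_div₀, map_prod]
  simp only [map_div₀, map_sub, map_mul, map_one, Complex.conj_conj, Complex.conj_ofReal,
    circ_conj hz]
  have hzz : z * z⁻¹ = 1 := mul_inv_cancel₀ hz0
  congr 1
  · rw [div_eq_div_iff]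
    · linear_combination (-((Real.sqrt (1 - ‖ξ k‖ ^ 2) : ℝ) : ℂ)) * hzz
    · intro h
      have h2 : z⁻¹ - (starRingEnd ℂ) (ξ k) = z⁻¹ * (1 - (starRingEnd ℂ) (ξ k) * z) := by
        field_simp
      rw [h2] at h
      rcases mul_eq_zero.1 h with h3 | h3
      · exact inv_ne_zero hz0 h3
      · exact circ_den_ne hz (hξ k) h3
    · exact circ_den_ne hz (hξ k)
  · apply Finset.prod_congr rfl
    intro j _
    rw [div_eq_div_iff]
    · linear_combination (ξ j * (starRingEnd ℂ) (ξ j) - 1) * hzz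
    · intro h
      have h2 : z⁻¹ - (starRingEnd ℂ) (ξ j) = z⁻¹ * (1 - (starRingEnd ℂ) (ξ j) * z) := by
        field_simp
      rw [h2] at h
      rcases mul_eq_zero.1 h with h3 | h3
      · exact inv_ne_zero hz0 h3
      · exact circ_den_ne hz (hξ j) h3
    · exact circ_den_ne hz (hξ j)

lemma sqrt_mul_self' {w : ℂ} (hw : ‖w‖ < 1) :
    ((Real.sqrt (1 - ‖w‖ ^ 2) : ℝ) : ℂ) * ((Real.sqrt (1 - ‖w‖ ^ 2) : ℝ) : ℂ)
      = 1 - (starRingEnd ℂ) w * w := by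
  have h1 : (0:ℝ) ≤ 1 - ‖w‖ ^ 2 := by
    have := norm_nonneg w
    nlinarith
  have h2 : (starRingEnd ℂ) w * w = ((‖w‖ ^ 2 : ℝ) : ℂ) := by
    rw [mul_comm, Complex.mul_conj, Complex.normSq_eq_norm_sq]
  rw [h2, ← Complex.ofReal_mul, Real.mul_self_sqrt h1, ← Complex.ofReal_one, ← Complex.ofReal_sub]

lemma point_diag (ξ : ℕ → ℂ) (hξ : ∀ j, ‖ξ j‖ < 1) (k : ℕ) {z : ℂ}
    (hz : ‖z‖ = 1) :
    (starRingEnd ℂ) (TM ξ k z) * TM ξ k z =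
      (1 - (starRingEnd ℂ) (ξ k) * z)⁻¹ + ξ k * z⁻¹ / (1 - ξ k * z⁻¹) := by
  have hz0 := circ_ne_zero hz
  have hzz : z * z⁻¹ = 1 := mul_inv_cancel₀ hz0
  have hden := circ_den_ne hz (hξ k)
  have hsub := circ_sub_ne hz (hξ k)
  rw [conj_TM ξ hξ k hz, TM]
  have hcancel : (∏ j ∈ range k, (z - ξ j) / (1 - (starRingEnd ℂ) (ξ j) * z)) *
      (∏ j ∈ range k, (1 - (starRingEnd ℂ) (ξ j) * z) / (z - ξ j)) = 1 := by
    rw [← Finset.prod_mul_distrib]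
    apply Finset.prod_eq_one
    intro j _
    rw [div_mul_div_comm, mul_comm]
    exact div_self (mul_ne_zero (circ_den_ne hz (hξ j)) (circ_sub_ne hz (hξ j)))
  have hre : ((Real.sqrt (1 - ‖ξ k‖ ^ 2) : ℝ) : ℂ) * z /
        (1 - (starRingEnd ℂ) (ξ k) * z) *
        (∏ j ∈ range k, (z - ξ j) / (1 - (starRingEnd ℂ) (ξ j) * z)) *
        (((Real.sqrt (1 - ‖ξ k‖ ^ 2) : ℝ) : ℂ) / (z - ξ k) *
          ∏ j ∈ range k, (1 - (starRingEnd ℂ) (ξ j) * z) / (z - ξ j))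
      = ((Real.sqrt (1 - ‖ξ k‖ ^ 2) : ℝ) : ℂ) * z /
          (1 - (starRingEnd ℂ) (ξ k) * z) *
          (((Real.sqrt (1 - ‖ξ k‖ ^ 2) : ℝ) : ℂ) / (z - ξ k)) *
          ((∏ j ∈ range k, (z - ξ j) / (1 - (starRingEnd ℂ) (ξ j) * z)) *
            (∏ j ∈ range k, (1 - (starRingEnd ℂ) (ξ j) * z) / (z - ξ j))) := by ring
  rw [hre, hcancel, mul_one]
  have hinv : ξ k * z⁻¹ / (1 - ξ k * z⁻¹) = ξ k / (z - ξ k) := by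
    have hden2 : 1 - ξ k * z⁻¹ ≠ 0 := by
      intro h
      apply hsub
      have : z * (1 - ξ k * z⁻¹) = z - ξ k := by
        rw [mul_sub, mul_one, ← mul_assoc, mul_comm z (ξ k), mul_assoc, hzz, mul_one]
      rw [← this, h, mul_zero]
    rw [div_eq_div_iff hden2 hsub]
    linear_combination (ξ k) * hzz
  rw [hinv]
  have hs := sqrt_mul_self' (hξ k)
  have hden' : 1 - z * (starRingEnd ℂ) (ξ k) ≠ 0 := by rw [mul_comm]; exact hden
  field_simp
  linear_combination z * hs

noncomputable def Gfun (ξ : ℕ → ℂ) (k l : ℕ) (w : ℂ) : ℂ :=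
  ((Real.sqrt (1 - ‖ξ k‖ ^ 2) : ℝ) : ℂ) *
    ((Real.sqrt (1 - ‖ξ l‖ ^ 2) : ℝ) : ℂ) *
    w * (∏ j ∈ Ico (k+1) l, (w - (starRingEnd ℂ) (ξ j))) /
    ∏ j ∈ Ico k (l+1), (1 - ξ j * w)

lemma point_off (ξ : ℕ → ℂ) (hξ : ∀ j, ‖ξ j‖ < 1) {k l : ℕ} (hkl : k < l)
    {z : ℂ} (hz : ‖z‖ = 1) :
    (starRingEnd ℂ) (TM ξ k z) * TM ξ l z = Gfun ξ k l z⁻¹ := by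
  have hz0 := circ_ne_zero hz
  have hzz : z * z⁻¹ = 1 := mul_inv_cancel₀ hz0
  obtain ⟨m, rfl⟩ : ∃ m, l = k + 1 + m := ⟨l - (k+1), by omega⟩
  set sk := ((Real.sqrt (1 - ‖ξ k‖ ^ 2) : ℝ) : ℂ) with hsk
  set sl := ((Real.sqrt (1 - ‖ξ (k+1+m)‖ ^ 2) : ℝ) : ℂ) with hsl
  rw [conj_TM ξ hξ k hz, TM]
  -- split the range (k+1+m) product
  have hsplit : (∏ j ∈ range (k+1+m), (1 - (starRingEnd ℂ) (ξ j) * z) / (z - ξ j))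
      = (∏ j ∈ range k, (1 - (starRingEnd ℂ) (ξ j) * z) / (z - ξ j)) *
        ∏ j ∈ Ico k (k+1+m), (1 - (starRingEnd ℂ) (ξ j) * z) / (z - ξ j) := by
    rw [range_eq_Ico,
      ← Finset.prod_Ico_consecutive _ (Nat.zero_le k) (by omega : k ≤ k+1+m), range_eq_Ico]
  have hcancel : (∏ j ∈ range k, (z - ξ j) / (1 - (starRingEnd ℂ) (ξ j) * z)) *
      (∏ j ∈ range k, (1 - (starRingEnd ℂ) (ξ j) * z) / (z - ξ j)) = 1 := by
    rw [← Finset.prod_mul_distrib]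
    apply Finset.prod_eq_one
    intro j _
    rw [div_mul_div_comm, mul_comm]
    exact div_self (mul_ne_zero (circ_den_ne hz (hξ j)) (circ_sub_ne hz (hξ j)))
  rw [hsplit]
  have hre : sk * z / (1 - (starRingEnd ℂ) (ξ k) * z) *
        (∏ j ∈ range k, (z - ξ j) / (1 - (starRingEnd ℂ) (ξ j) * z)) *
        (sl / (z - ξ (k+1+m)) *
          ((∏ j ∈ range k, (1 - (starRingEnd ℂ) (ξ j) * z) / (z - ξ j)) *
            ∏ j ∈ Ico k (k+1+m), (1 - (starRingEnd ℂ) (ξ j) * z) / (z - ξ j)))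
      = sk * z / (1 - (starRingEnd ℂ) (ξ k) * z) * (sl / (z - ξ (k+1+m))) *
          ((∏ j ∈ range k, (z - ξ j) / (1 - (starRingEnd ℂ) (ξ j) * z)) *
            (∏ j ∈ range k, (1 - (starRingEnd ℂ) (ξ j) * z) / (z - ξ j))) *
          ∏ j ∈ Ico k (k+1+m), (1 - (starRingEnd ℂ) (ξ j) * z) / (z - ξ j) := by ring
  rw [hre, hcancel, mul_one]
  -- peel the bottom index k
  rw [Finset.prod_eq_prod_Ico_succ_bot (by omega : k < k+1+m)]
  -- now both sides
  rw [Gfun]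
  have hnum : (∏ j ∈ Ico (k+1) (k+1+m), (z⁻¹ - (starRingEnd ℂ) (ξ j)))
      = (z⁻¹) ^ m * ∏ j ∈ Ico (k+1) (k+1+m), (1 - (starRingEnd ℂ) (ξ j) * z) := by
    have : ∀ j ∈ Ico (k+1) (k+1+m), z⁻¹ - (starRingEnd ℂ) (ξ j)
        = z⁻¹ * (1 - (starRingEnd ℂ) (ξ j) * z) := by
      intro j _
      field_simp
    rw [Finset.prod_congr rfl this, Finset.prod_mul_distrib, Finset.prod_const, Nat.card_Ico]
    congr 2
    omega
  have hden : (∏ j ∈ Ico k (k+1+m+1), (1 - ξ j * z⁻¹))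
      = (z⁻¹) ^ (m+2) * ∏ j ∈ Ico k (k+1+m+1), (z - ξ j) := by
    have : ∀ j ∈ Ico k (k+1+m+1), 1 - ξ j * z⁻¹ = z⁻¹ * (z - ξ j) := by
      intro j _
      field_simp
    rw [Finset.prod_congr rfl this, Finset.prod_mul_distrib, Finset.prod_const, Nat.card_Ico]
    congr 2
    omega
  rw [hnum, hden]
  -- split the denominator product
  have hdsplit : (∏ j ∈ Ico k (k+1+m+1), (z - ξ j))
      = (z - ξ k) * (∏ j ∈ Ico (k+1) (k+1+m), (z - ξ j)) * (z - ξ (k+1+m)) := by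
    rw [Finset.prod_eq_prod_Ico_succ_bot (by omega : k < k+1+m+1),
      Finset.prod_Ico_succ_top (by omega : k+1 ≤ k+1+m)]
    ring
  rw [hdsplit]
  -- turn the remaining Ico product of quotients into a quotient of products
  rw [Finset.prod_div_distrib]
  set P := ∏ j ∈ Ico (k+1) (k+1+m), (1 - (starRingEnd ℂ) (ξ j) * z) with hP
  set Q := ∏ j ∈ Ico (k+1) (k+1+m), (z - ξ j) with hQ
  have hPne : P ≠ 0 := Finset.prod_ne_zero_iff.2 fun j _ => circ_den_ne hz (hξ j)
  have hQne : Q ≠ 0 := Finset.prod_ne_zero_iff.2 fun j _ => circ_sub_ne hz (hξ j)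
  have h1 := circ_den_ne hz (hξ k)
  have h2 := circ_sub_ne hz (hξ k)
  have h3 := circ_sub_ne hz (hξ (k+1+m))
  have h1' : 1 - z * (starRingEnd ℂ) (ξ k) ≠ 0 := by rw [mul_comm]; exact h1
  field_simp
  rw [hsk, hsl]
  linear_combination (((Real.sqrt (1 - ‖ξ k‖ ^ 2) : ℝ) : ℂ) *
    ((Real.sqrt (1 - ‖ξ (k+1+m)‖ ^ 2) : ℝ) : ℂ) * z⁻¹ ^ m * (z * z⁻¹ + 1)) * hzz

lemma exists_R (s : Finset ℕ) (ξ : ℕ → ℂ) (hξ : ∀ j, ‖ξ j‖ < 1) :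
    ∃ R : ℝ≥0, 1 < R ∧ ∀ j ∈ s, ∀ w : ℂ, ‖w‖ ≤ R → 1 - ξ j * w ≠ 0 := by
  classical
  set ρ : ℝ := ((s.sup fun j => ‖ξ j‖₊ : ℝ≥0) : ℝ) with hρ
  have hρ0 : 0 ≤ ρ := (s.sup fun j => ‖ξ j‖₊).coe_nonneg
  have hρ1 : ρ < 1 := by
    rw [hρ]
    have : (s.sup fun j => ‖ξ j‖₊) < 1 := by
      apply Finset.sup_lt_iff (by norm_num : (⊥:ℝ≥0) < 1) |>.2
      intro j hj
      have := hξ j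
      rw [← NNReal.coe_lt_coe]
      simpa [coe_nnnorm] using this
    exact_mod_cast this
  have hρle : ∀ j ∈ s, ‖ξ j‖ ≤ ρ := by
    intro j hj
    have := Finset.le_sup (f := fun j => ‖ξ j‖₊) hj
    rw [hρ]
    have h2 : (‖ξ j‖₊ : ℝ) ≤ ((s.sup fun j => ‖ξ j‖₊ : ℝ≥0) : ℝ) := by exact_mod_cast this
    simpa [coe_nnnorm] using h2
  refine ⟨Real.toNNReal (2 / (1 + ρ)), ?_, ?_⟩
  · rw [← NNReal.coe_lt_coe, Real.coe_toNNReal _ (by positivity), NNReal.coe_one]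
    rw [lt_div_iff₀ (by linarith)]
    linarith
  · intro j hj w hw
    intro h
    rw [sub_eq_zero] at h
    have h1 : ‖ξ j * w‖ ≤ ρ * (2 / (1 + ρ)) := by
      rw [norm_mul]
      apply mul_le_mul (hρle j hj) _ (norm_nonneg w) hρ0
      calc ‖w‖ ≤ (Real.toNNReal (2 / (1 + ρ)) : ℝ) := hw
        _ = 2 / (1 + ρ) := Real.coe_toNNReal _ (by positivity)
    have h2 : ρ * (2 / (1 + ρ)) < 1 := by
      rw [mul_div_assoc', div_lt_one (by linarith)]
      linarith
    rw [← h] at h1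
    simp at h1
    linarith

lemma Gfun_zero (ξ : ℕ → ℂ) (k l : ℕ) : Gfun ξ k l 0 = 0 := by
  simp [Gfun]

lemma Gfun_diff (ξ : ℕ → ℂ) (hξ : ∀ j, ‖ξ j‖ < 1) (k l : ℕ) :
    ∃ R : ℝ≥0, 1 < R ∧ DifferentiableOn ℂ (Gfun ξ k l) (Metric.closedBall 0 R) := by
  obtain ⟨R, hR, hne⟩ := exists_R (Ico k (l+1)) ξ hξ
  refine ⟨R, hR, ?_⟩
  apply DifferentiableOn.div
  · apply Differentiable.differentiableOn
    apply Differentiable.mul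
    · exact (differentiable_const _).mul differentiable_id
    · exact Differentiable.fun_finsetProd fun j _ => by fun_prop
  · apply Differentiable.differentiableOn
    exact Differentiable.fun_finsetProd fun j _ =>
      by fun_prop
  · intro x hx
    rw [Metric.mem_closedBall, dist_zero_right] at hx
    exact Finset.prod_ne_zero_iff.2 fun j hj => hne j hj x hx

open Filter in
lemma off_case (ξ : ℕ → ℂ) (hξ : ∀ j, ‖ξ j‖ < 1) {k l : ℕ} (hkl : k < l) :
    Filter.Tendsto
      (fun N : ℕ => (N : ℂ)⁻¹ *
        ∑ r ∈ Finset.range N, (starRingEnd ℂ) (TM ξ k (zroot N r)) * TM ξ l (zroot N r))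
      Filter.atTop (nhds 0) := by
  obtain ⟨R, hR, hdiff⟩ := Gfun_diff ξ hξ k l
  have h := avg_tendsto (Gfun ξ k l) hR hdiff (-1) (Or.inr rfl)
  rw [Gfun_zero] at h
  apply h.congr
  intro N
  congr 1
  apply Finset.sum_congr rfl
  intro r _
  rw [zpow_neg_one]
  exact (point_off ξ hξ hkl (abs_zroot N r)).symm

open Filter in
lemma diag_case (ξ : ℕ → ℂ) (hξ : ∀ j, ‖ξ j‖ < 1) (k : ℕ) :
    Filter.Tendsto
      (fun N : ℕ => (N : ℂ)⁻¹ *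
        ∑ r ∈ Finset.range N, (starRingEnd ℂ) (TM ξ k (zroot N r)) * TM ξ k (zroot N r))
      Filter.atTop (nhds 1) := by
  set f₁ : ℂ → ℂ := fun w => (1 - (starRingEnd ℂ) (ξ k) * w)⁻¹ with hf₁
  set f₂ : ℂ → ℂ := fun w => ξ k * w / (1 - ξ k * w) with hf₂
  obtain ⟨R₁, hR₁, hne₁⟩ := exists_R {k} (fun j => (starRingEnd ℂ) (ξ j))
    (fun j => by simpa using hξ j)
  obtain ⟨R₂, hR₂, hne₂⟩ := exists_R {k} ξ hξ
  have hd₁ : DifferentiableOn ℂ f₁ (Metric.closedBall 0 R₁) := by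
    apply DifferentiableOn.inv
    · apply Differentiable.differentiableOn
      exact (differentiable_const _).sub ((differentiable_const _).mul differentiable_id)
    · intro x hx
      rw [Metric.mem_closedBall, dist_zero_right] at hx
      exact hne₁ k (Finset.mem_singleton_self k) x hx
  have hd₂ : DifferentiableOn ℂ f₂ (Metric.closedBall 0 R₂) := by
    apply DifferentiableOn.div
    · apply Differentiable.differentiableOn
      exact (differentiable_const _).mul differentiable_id
    · apply Differentiable.differentiableOn
      exact (differentiable_const _).sub ((differentiable_const _).mul differentiable_id)
    · intro x hx
      rw [Metric.mem_closedBall, dist_zero_right] at hx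
      exact hne₂ k (Finset.mem_singleton_self k) x hx
  have h₁ := avg_tendsto f₁ hR₁ hd₁ 1 (Or.inl rfl)
  have h₂ := avg_tendsto f₂ hR₂ hd₂ (-1) (Or.inr rfl)
  have hf₁0 : f₁ 0 = 1 := by simp [hf₁]
  have hf₂0 : f₂ 0 = 0 := by simp [hf₂]
  rw [hf₁0] at h₁
  rw [hf₂0] at h₂
  have hadd := h₁.add h₂
  rw [add_zero] at hadd
  apply hadd.congr
  intro N
  rw [← mul_add, ← Finset.sum_add_distrib]
  congr 1
  apply Finset.sum_congr rfl
  intro r _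
  rw [zpow_one, zpow_neg_one]
  exact (point_diag ξ hξ k (abs_zroot N r)).symm

open Filter in
/-- For poles in the open unit disk and fixed k, l, the averaged sample
sum (1/N) Σ_{r=1}^N conj(ψ_k(z_r)) ψ_l(z_r) over the N-th roots of unity converges
to the Kronecker delta δ_{kl} as N → ∞. -/
theorem tm_sample_sum_tendsto_delta (ξ : ℕ → ℂ) (hξ : ∀ j, ‖ξ j‖ < 1)
    (k l : ℕ) :
    Filter.Tendsto
      (fun N : ℕ => (N : ℂ)⁻¹ *
        ∑ r ∈ Finset.range N, (starRingEnd ℂ) (TM ξ k (zroot N r)) * TM ξ l (zroot N r))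
      Filter.atTop (nhds (if k = l then 1 else 0)) := by
  rcases lt_trichotomy k l with hkl | rfl | hlk
  · rw [if_neg (Nat.ne_of_lt hkl)]
    exact off_case ξ hξ hkl
  · rw [if_pos rfl]
    exact diag_case ξ hξ k
  · rw [if_neg (Nat.ne_of_gt hlk)]
    have base := off_case ξ hξ hlk
    have hconj : Filter.Tendsto
        (fun N : ℕ => (starRingEnd ℂ) ((N : ℂ)⁻¹ *
          ∑ r ∈ Finset.range N, (starRingEnd ℂ) (TM ξ l (zroot N r)) * TM ξ k (zroot N r)))
        Filter.atTop (nhds ((starRingEnd ℂ) 0)) :=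
      (Complex.continuous_conj.tendsto 0).comp base
    rw [map_zero] at hconj
    apply hconj.congr
    intro N
    rw [map_mul, map_sum]
    congr 1
    · rw [map_inv₀, Complex.conj_natCast]
    · apply Finset.sum_congr rfl
      intro r _
      rw [map_mul, Complex.conj_conj, mul_comm]
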